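/- For k ≥ 2 and positive integers a, b, c, the blown-up Mycielskian graph M_k(a,b,c) contains no copy of the complete graph K_{k+1}. -/
import Mathlib


open SimpleGraph

/-- The blown-up Mycielskian graph `M_k(a,b,c)`, with parts `V_1,…,V_k` of size `a`
(the `Sum.inl` vertices), `W_1,…,W_k` of size `b` (the `Sum.inr ∘ Sum.inl` vertices)
and `U` of size `c` (the `Sum.inr ∘ Sum.inr` vertices); edges are
`K[V_i,V_j]` and `K[V_i,W_j]` for `i ≠ j`, and `K[W_i,U]`. -/
def Myc (k a b c : ℕ) : SimpleGraph ((Fin k × Fin a) ⊕ (Fin k × Fin b) ⊕ Fin c) :=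
  SimpleGraph.fromRel (fun x y =>
    match x, y with
    | Sum.inl v, Sum.inl w => v.1 ≠ w.1
    | Sum.inl v, Sum.inr (Sum.inl w) => v.1 ≠ w.1
    | Sum.inr (Sum.inl _), Sum.inr (Sum.inr _) => True
    | _, _ => False)

/-- `H` has a copy in `G` (an injective graph homomorphism). -/
def Contains {α β : Type*} (H : SimpleGraph α) (G : SimpleGraph β) : Prop :=
  ∃ f : H →g G, Function.Injective f

theorem stmt8 (k a b c : ℕ) (hk : 2 ≤ k) (ha : 1 ≤ a) (hb : 1 ≤ b) (hc : 1 ≤ c) :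
    ¬ Contains (completeGraph (Fin (k + 1))) (Myc k a b c) := by
  rintro ⟨f, hf⟩
  have hadj : ∀ i j : Fin (k + 1), i ≠ j → (Myc k a b c).Adj (f i) (f j) := by
    intro i j hij
    exact f.map_rel (by simpa using hij)
  -- two W vertices are never adjacent
  have hWW : ∀ i j : Fin (k + 1), i ≠ j → ∀ w1 w2,
      f i = Sum.inr (Sum.inl w1) → f j = Sum.inr (Sum.inl w2) → False := by
    intro i j hij w1 w2 h1 h2
    have h := hadj i j hij
    rw [h1, h2] at h
    simp [Myc, SimpleGraph.fromRel_adj] at h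
  -- no vertex of the clique lies in U
  have hU : ∀ i : Fin (k + 1), ∀ u, f i ≠ Sum.inr (Sum.inr u) := by
    intro i0 u hu
    -- pick two further distinct vertices j1 j2 ≠ i0
    have hcard : 1 < ({i0}ᶜ : Finset (Fin (k + 1))).card := by
      rw [Finset.card_compl]
      simp only [Fintype.card_fin, Finset.card_singleton]
      omega
    obtain ⟨j1, hj1, j2, hj2, hj12⟩ := Finset.one_lt_card.mp hcard
    have hj1' : j1 ≠ i0 := by simpa using hj1
    have hj2' : j2 ≠ i0 := by simpa using hj2
    -- any vertex adjacent to a U vertex is a W vertex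
    have hW : ∀ j : Fin (k + 1), j ≠ i0 → ∃ w, f j = Sum.inr (Sum.inl w) := by
      intro j hj
      have h := hadj j i0 hj
      rw [hu] at h
      rcases hfj : f j with v | w | u'
      · rw [hfj] at h; simp [Myc, SimpleGraph.fromRel_adj] at h
      · exact ⟨w, rfl⟩
      · rw [hfj] at h; simp [Myc, SimpleGraph.fromRel_adj] at h
    obtain ⟨w1, hw1⟩ := hW j1 hj1'
    obtain ⟨w2, hw2⟩ := hW j2 hj2'
    exact hWW j1 j2 hj12 w1 w2 hw1 hw2
  -- so each vertex is in V or W; extract its Fin k index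
  have hidx : ∀ i : Fin (k + 1), ∃ x : Fin k,
      (∃ v : Fin a, f i = Sum.inl (x, v)) ∨ (∃ w : Fin b, f i = Sum.inr (Sum.inl (x, w))) := by
    intro i
    rcases hfi : f i with v | w | u
    · exact ⟨v.1, Or.inl ⟨v.2, rfl⟩⟩
    · exact ⟨w.1, Or.inr ⟨w.2, rfl⟩⟩
    · exact absurd hfi (hU i u)
  choose g hg using hidx
  -- g is injective
  have hginj : Function.Injective g := by
    intro i j hij
    by_contra hne
    have h := hadj i j hne
    rcases hg i with ⟨v1, h1⟩ | ⟨w1, h1⟩ <;> rcases hg j with ⟨v2, h2⟩ | ⟨w2, h2⟩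
    · rw [h1, h2] at h
      simp [Myc, SimpleGraph.fromRel_adj, hij] at h
    · rw [h1, h2] at h
      simp [Myc, SimpleGraph.fromRel_adj, hij] at h
    · rw [h1, h2] at h
      simp [Myc, SimpleGraph.fromRel_adj, hij] at h
    · exact hWW i j hne (g i, w1) (g j, w2) h1 h2
  have := Fintype.card_le_of_injective g hginj
  simp at this
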